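/- Fix a strictly positive d×d density matrix ρ, Hermitian L₁,…,Lₙ with Tr(ρLᵢ) = 0 and invertible Gram matrix G = [Re Tr(ρLᵢLⱼ)] with inverse [g^{ij}], and c ∈ ℝⁿ. Let U = [uᵏᵢ] ∈ ℝ^{n×n} be invertible with inverse W = [wⁱₖ], let (p₁,…,pₙ) be a probability vector with all pₖ > 0, and let γ = [γᵏⁱ] be reals with Σₖ pₖγₖⁱ = cⁱ for every i. Set Lⁱ := Σⱼ g^{ij}Lⱼ and Xᵏ := Σᵢ uᵏᵢ Lⁱ, with spectral decomposition Xᵏ = Σ_r xᵏ_r πᵏ_r. Define the estimator Π with outcome set of pairs (k,r), POVM π_{(k,r)} := pₖπᵏ_r, and estimate fⁱ(k, x) := γₖⁱ + (wⁱₖ/pₖ)x evaluated at x = xᵏ_r. Then: (1) Π is locally unbiased, i.e. Aⁱ := Σ_{k,r} fⁱ(k, xᵏ_r)π_{(k,r)} satisfies Tr(ρAⁱ) = cⁱ and Re Tr(ρLⱼAⁱ) = δⁱⱼ (indeed Aⁱ = cⁱ·I + Lⁱ); and (2) for every k, with V(Π) := [Σ_{(l,r)} (fⁱ(l,xˡ_r)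 − cⁱ)(fʲ(l,xˡ_r) − cʲ)Tr(ρπ_{(l,r)})] and uᵏ the k-th row of U: (uᵏ)ᵀV(Π)uᵏ = (1/pₖ)(uᵏ)ᵀG⁻¹uᵏ + Σ_l p_l (aᵏ_l)², where aᵏ_l := Σᵢ uᵏᵢ(γ_lⁱ − cⁱ). -/

import Mathlib

/-
Since `Σ_r πᵏ_r = I` and `Σ_k p_k γ_kⁱ = cⁱ`, the operator `Aⁱ` collapses to `cⁱI + Σ_k wⁱ_k Xᵏ`,
and `W U = I` turns this back into `cⁱI + Lⁱ`; `Re Tr(ρ L_j Lⁱ) = δⁱ_j` because `G` is symmetric.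
For the variance, `U W = I` shows that on arm `l` the contracted deviation `uᵏ · (f - c)` is
`aᵏ_l + δ_{kl} x / p_k`. The outcome distribution `Tr(ρ πˡ_r)` of arm `l` has mean `Tr(ρ Xˡ) = 0`,
so the cross term vanishes, and its second moment is `Re Tr(ρ (Xᵏ)²) = (uᵏ)ᵀ G⁻¹ uᵏ`.
-/

open Matrix
open scoped ComplexOrder

noncomputable section

/-- A POVM on a finite set `Ω`: positive semidefinite matrices summing to `I`. -/
def IsPOVM {d : ℕ} {Ω : Type} [Fintype Ω] (π : Ω → Matrix (Fin d) (Fin d) ℂ) : Prop :=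
  (∀ ω, (π ω).PosSemidef) ∧ ∑ ω, π ω = 1

open Finset

theorem sum_smul_sum_smul_eq_mul_apply {α M ι κ ν : Type*} [Fintype ι] [Fintype κ] [Semiring α]
    [AddCommMonoid M] [Module α M] (A : Matrix ν κ α) (B : Matrix κ ι α) (Y : ι → M) (i : ν) :
    ∑ k, A i k • ∑ j, B k j • Y j = ∑ j, (A * B) i j • Y j := by
  simp_rw [smul_sum, smul_smul, mul_apply, sum_smul]
  exact sum_comm

theorem sum_randomized_estimate {M κ R : Type*} [AddCommMonoid M] [Module ℝ M] [Fintype κ]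
    [Fintype R] {p : κ → ℝ} (hp : ∀ k, p k ≠ 0) {P : κ → R → M} {e : M} (hP : ∀ k, ∑ r, P k r = e)
    (γ w : κ → ℝ) (x : κ → R → ℝ) :
    ∑ q : κ × R, (γ q.1 + w q.1 / p q.1 * x q.1 q.2) • p q.1 • P q.1 q.2 =
      (∑ k, p k * γ k) • e + ∑ k, w k • ∑ r, x k r • P k r := by
  have arm : ∀ k, ∑ r, (γ k + w k / p k * x k r) • p k • P k r =
      (p k * γ k) • e + w k • ∑ r, x k r • P k r := fun k => by
    simp_rw [← hP k, smul_sum, ← sum_add_distrib, smul_smul, ← add_smul]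
    refine sum_congr rfl fun r _ => congrArg (· • P k r) ?_
    field_simp [hp k]
  rw [Fintype.sum_prod_type]
  simp_rw [arm, sum_add_distrib, ← sum_smul]

section Projections

variable {m R : Type*} [Fintype m] [Fintype R]

theorem posSemidef_of_isHermitian_of_mul_self {P : Matrix m m ℂ} (hP : P.IsHermitian)
    (hPP : P * P = P) : P.PosSemidef := by
  rw [← hPP]
  nth_rewrite 1 [← hP.eq]
  exact posSemidef_conjTranspose_mul_self P

theorem sum_smul_mul_sum_smul_of_orthogonal {P : R → Matrix m m ℂ} (hidem : ∀ r, P r * P r = P r)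
    (horth : ∀ r s, r ≠ s → P r * P s = 0) (a b : R → ℝ) :
    (∑ r, a r • P r) * ∑ s, b s • P s = ∑ r, (a r * b r) • P r := by
  simp_rw [sum_mul, mul_sum, smul_mul_smul_comm]
  refine sum_congr rfl fun r _ => ?_
  rw [Fintype.sum_eq_single r fun s hs => by rw [horth r s (Ne.symm hs), smul_zero], hidem]

end Projections

theorem isPOVM_of_isHermitian_of_mul_self {d : ℕ} {R : Type} [Fintype R]
    {P : R → Matrix (Fin d) (Fin d) ℂ} (hherm : ∀ r, (P r).IsHermitian)
    (hidem : ∀ r, P r * P r = P r) (hsum : ∑ r, P r = 1) : IsPOVM P :=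
  ⟨fun r => posSemidef_of_isHermitian_of_mul_self (hherm r) (hidem r), hsum⟩

theorem IsPOVM.mixture {d : ℕ} {κ R : Type} [Fintype κ] [Fintype R]
    {P : κ → R → Matrix (Fin d) (Fin d) ℂ} (hP : ∀ k, IsPOVM (P k)) {p : κ → ℝ}
    (hp : ∀ k, 0 ≤ p k) (hsum : ∑ k, p k = 1) :
    IsPOVM fun q : κ × R => p q.1 • P q.1 q.2 := by
  refine ⟨fun q => ((hP q.1).1 q.2).smul (hp q.1), ?_⟩
  rw [Fintype.sum_prod_type]
  simp_rw [← smul_sum, (hP _).2, ← sum_smul, hsum, one_smul]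

section Trace

variable {m ι : Type*} [Fintype m] [Fintype ι]

theorem trace_mul_sum_smul (A : Matrix m m ℂ) (a : ι → ℝ) (L : ι → Matrix m m ℂ) :
    trace (A * ∑ i, a i • L i) = ∑ i, a i • trace (A * L i) := by
  simp [mul_sum, trace_sum, trace_smul]

theorem re_trace_mul_sum_smul (A : Matrix m m ℂ) (a : ι → ℝ) (L : ι → Matrix m m ℂ) :
    (trace (A * ∑ i, a i • L i)).re = ∑ i, a i * (trace (A * L i)).re := by
  simp [trace_mul_sum_smul, Complex.re_sum]

theorem re_trace_mul_mul_comm {ρ A B : Matrix m m ℂ} (hρ : ρ.IsHermitian) (hA : A.IsHermitian)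
    (hB : B.IsHermitian) : (trace (ρ * A * B)).re = (trace (ρ * B * A)).re := by
  have : (ρ * A * B)ᴴ = B * A * ρ := by
    rw [conjTranspose_mul, conjTranspose_mul, hA.eq, hB.eq, hρ.eq, mul_assoc]
  rw [← Complex.conj_re, starRingEnd_apply, ← trace_conjTranspose, this, trace_mul_cycle, mul_assoc]

variable {ρ : Matrix m m ℂ} {L : ι → Matrix m m ℂ} {G : Matrix ι ι ℝ}

theorem re_trace_mul_sum_smul_mul_sum_smul (hG : ∀ i j, G i j = (trace (ρ * L i * L j)).re)
    (a b : ι → ℝ) :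
    (trace (ρ * ((∑ i, a i • L i) * ∑ j, b j • L j))).re = a ⬝ᵥ (G *ᵥ b) := by
  simp_rw [← mul_assoc, re_trace_mul_sum_smul, mul_assoc, sum_mul, smul_mul, re_trace_mul_sum_smul,
    ← mul_assoc, ← hG, dotProduct, mulVec, dotProduct, mul_sum]
  rw [sum_comm]
  exact sum_congr rfl fun i _ => sum_congr rfl fun j _ => by ring

variable [DecidableEq ι]

theorem re_trace_mul_mul_sum_inv_smul (hG : ∀ i j, G i j = (trace (ρ * L i * L j)).re)
    (hsymm : G.IsSymm) (hdet : IsUnit G.det) (i j : ι) :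
    (trace (ρ * L j * ∑ m, G⁻¹ i m • L m)).re = if i = j then 1 else 0 := by
  calc (trace (ρ * L j * ∑ m, G⁻¹ i m • L m)).re = (G * G⁻¹) j i := by
        rw [re_trace_mul_sum_smul, mul_apply]
        exact sum_congr rfl fun m _ => by rw [← hG, hsymm.inv.apply, mul_comm]
    _ = if i = j then 1 else 0 := by simp only [mul_nonsing_inv G hdet, one_apply, eq_comm]

theorem re_trace_sum_smul_sum_inv_smul_sq (hG : ∀ i j, G i j = (trace (ρ * L i * L j)).re)
    (hsymm : G.IsSymm) (hdet : IsUnit G.det) {κ : Type*} (U : Matrix κ ι ℝ) (k : κ) :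
    (trace (ρ * ((∑ i, U k i • ∑ j, G⁻¹ i j • L j) * ∑ i, U k i • ∑ j, G⁻¹ i j • L j))).re =
      ∑ i, ∑ j, U k i * G⁻¹ i j * U k j := by
  rw [sum_smul_sum_smul_eq_mul_apply, re_trace_mul_sum_smul_mul_sum_smul hG, mul_apply_eq_vecMul,
    ← mulVec_transpose, hsymm.inv.eq, mulVec_mulVec, mul_nonsing_inv G hdet, one_mulVec,
    dotProduct_comm]
  simp_rw [dotProduct, mulVec, dotProduct, mul_sum, mul_assoc]

end Trace

theorem sum_mul_sum_mul_mul_eq_sum_sq {ι Q : Type*} [Fintype ι] [Fintype Q] (u : ι → ℝ)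
    (F : ι → Q → ℝ) (w : Q → ℝ) :
    ∑ i, ∑ j, u i * (∑ q, F i q * F j q * w q) * u j = ∑ q, (∑ i, u i * F i q) ^ 2 * w q := by
  calc ∑ i, ∑ j, u i * (∑ q, F i q * F j q * w q) * u j
      = ∑ i, ∑ j, ∑ q, u i * F i q * (u j * F j q) * w q :=
        sum_congr rfl fun i _ => sum_congr rfl fun j _ => by
          rw [mul_sum, sum_mul]
          exact sum_congr rfl fun q _ => by ring
    _ = ∑ q, ∑ i, ∑ j, u i * F i q * (u j * F j q) * w q :=
        (sum_congr rfl fun i _ => sum_comm).trans sum_comm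
    _ = ∑ q, (∑ i, u i * F i q) ^ 2 * w q := by simp_rw [sq, sum_mul_sum, sum_mul]

theorem sum_add_mul_sq_mul {R : Type*} [Fintype R] {t x : R → ℝ} (ht : ∑ r, t r = 1)
    (hxt : ∑ r, x r * t r = 0) (a b : ℝ) :
    ∑ r, (a + b * x r) ^ 2 * t r = a ^ 2 + b ^ 2 * ∑ r, x r ^ 2 * t r := by
  have expand : ∀ r, (a + b * x r) ^ 2 * t r =
      a ^ 2 * t r + 2 * a * b * (x r * t r) + b ^ 2 * (x r ^ 2 * t r) := fun r => by ring
  simp_rw [expand, sum_add_distrib, ← mul_sum, ht, hxt]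
  ring

theorem randomized_variance {ι κ R : Type*} [Fintype ι] [Fintype κ] [Fintype R] [DecidableEq κ]
    {U : Matrix κ ι ℝ} {W : Matrix ι κ ℝ} (hUW : U * W = 1) (p : κ → ℝ)
    {t x : κ → R → ℝ} (ht : ∀ l, ∑ r, t l r = 1) (hxt : ∀ l, ∑ r, x l r * t l r = 0)
    (γ : κ → ι → ℝ) (c : ι → ℝ) (k : κ) :
    ∑ i, ∑ j, U k i * (∑ q : κ × R, (γ q.1 i + W i q.1 / p q.1 * x q.1 q.2 - c i) *
        (γ q.1 j + W j q.1 / p q.1 * x q.1 q.2 - c j) * (p q.1 * t q.1 q.2)) * U k j =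
      1 / p k * ∑ r, x k r ^ 2 * t k r + ∑ l, p l * (∑ i, U k i * (γ l i - c i)) ^ 2 := by
  have hrow : ∀ l r, ∑ i, U k i * (γ l i + W i l / p l * x l r - c i) =
      ∑ i, U k i * (γ l i - c i) + (U * W) k l / p l * x l r := by
    intro l r
    rw [mul_apply, sum_div, sum_mul, ← sum_add_distrib]
    exact sum_congr rfl fun i _ => by ring
  rw [sum_mul_sum_mul_mul_eq_sum_sq, Fintype.sum_prod_type]
  simp_rw [hrow, mul_left_comm _ (p _), ← mul_sum, sum_add_mul_sq_mul (ht _) (hxt _), hUW, mul_add,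
    sum_add_distrib]
  rw [add_comm, Fintype.sum_eq_single k fun l hl => by simp [one_apply_ne' hl], one_apply_eq]
  field_simp

/-- The randomized estimator built from the observables
`Xᵏ = Σᵢ uᵏᵢ Lⁱ` (Lemma on the estimator `Π = (π, f)`): it is locally unbiased, and its
variance satisfies `(uᵏ)ᵀV(Π)uᵏ = (1/pₖ)(uᵏ)ᵀG⁻¹uᵏ + Σₗ pₗ(aᵏₗ)²`. -/
theorem randomized_estimator_lemma (d n : ℕ)
    (ρ : Matrix (Fin d) (Fin d) ℂ) (hρ : ρ.PosDef) (htr : ρ.trace = 1)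
    (L : Fin n → Matrix (Fin d) (Fin d) ℂ) (hL : ∀ i, (L i).IsHermitian)
    (hL0 : ∀ i, (ρ * L i).trace = 0)
    (G : Matrix (Fin n) (Fin n) ℝ)
    (hG : ∀ i j, G i j = (Matrix.trace (ρ * L i * L j)).re)
    (hGinv : IsUnit G.det)
    (c : Fin n → ℝ)
    (U W : Matrix (Fin n) (Fin n) ℝ) (hUW : U * W = 1) (hWU : W * U = 1)
    (p : Fin n → ℝ) (hp : ∀ k, 0 < p k) (hpsum : ∑ k, p k = 1)
    (γ : Fin n → Fin n → ℝ) (hγ : ∀ i, ∑ k, p k * γ k i = c i)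
    -- spectral decompositions `Xᵏ = Σ_r xᵏ_r πᵏ_r` of the observables `Xᵏ = Σᵢ uᵏᵢ Lⁱ`
    (R : Type) (_ : Fintype R) (x : Fin n → R → ℝ)
    (Pj : Fin n → R → Matrix (Fin d) (Fin d) ℂ)
    (hPjherm : ∀ k r, (Pj k r).IsHermitian)
    (hPjidem : ∀ k r, Pj k r * Pj k r = Pj k r)
    (hPjorth : ∀ k r s, r ≠ s → Pj k r * Pj k s = 0)
    (hPjsum : ∀ k, ∑ r, Pj k r = 1)
    (hPjspec : ∀ k, (∑ i, U k i • ∑ j, G⁻¹ i j • L j) = ∑ r, (x k r : ℝ) • Pj k r) :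
    -- the POVM `π_{(k,r)} = pₖ πᵏ_r` of the randomized measurement
    IsPOVM (fun q : Fin n × R => p q.1 • Pj q.1 q.2) ∧
    -- (1) local unbiasedness: `Aⁱ = cⁱI + Lⁱ`, `Tr(ρAⁱ) = cⁱ`, `Re Tr(ρLⱼAⁱ) = δⁱⱼ`
    (∀ i, (∑ q : Fin n × R, (γ q.1 i + (W i q.1 / p q.1) * x q.1 q.2) •
            (p q.1 • Pj q.1 q.2)) =
          c i • (1 : Matrix (Fin d) (Fin d) ℂ) + ∑ j, G⁻¹ i j • L j) ∧
    (∀ i, Matrix.trace (ρ * ∑ q : Fin n × R,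
        (γ q.1 i + (W i q.1 / p q.1) * x q.1 q.2) • (p q.1 • Pj q.1 q.2)) = (c i : ℂ)) ∧
    (∀ i j, (Matrix.trace (ρ * L j * ∑ q : Fin n × R,
        (γ q.1 i + (W i q.1 / p q.1) * x q.1 q.2) • (p q.1 • Pj q.1 q.2))).re =
      if i = j then (1 : ℝ) else 0) ∧
    -- (2) the variance identity for each `k`
    (∀ k, (∑ i, ∑ j, U k i *
        (∑ q : Fin n × R,
          ((γ q.1 i + (W i q.1 / p q.1) * x q.1 q.2) - c i) *
          ((γ q.1 j + (W j q.1 / p q.1) * x q.1 q.2) - c j) *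
          (Matrix.trace (ρ * (p q.1 • Pj q.1 q.2))).re) * U k j) =
      (1 / p k) * (∑ i, ∑ j, U k i * G⁻¹ i j * U k j) +
        ∑ l, p l * (∑ i, U k i * (γ l i - c i))^2) := by
  have hGsymm : G.IsSymm := IsSymm.ext fun i j => by
    rw [hG, hG, re_trace_mul_mul_comm hρ.isHermitian (hL j) (hL i)]
  have hA (i : Fin n) : (∑ q : Fin n × R, (γ q.1 i + (W i q.1 / p q.1) * x q.1 q.2) •
      (p q.1 • Pj q.1 q.2)) = c i • (1 : Matrix (Fin d) (Fin d) ℂ) + ∑ j, G⁻¹ i j • L j := by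
    rw [sum_randomized_estimate (fun k => (hp k).ne') hPjsum (fun k => γ k i) (fun k => W i k) x,
      hγ]
    simp_rw [← hPjspec]
    rw [sum_smul_sum_smul_eq_mul_apply W U, hWU]
    simp [one_apply]
  refine ⟨IsPOVM.mixture (fun k => isPOVM_of_isHermitian_of_mul_self (hPjherm k) (hPjidem k)
    (hPjsum k)) (fun k => (hp k).le) hpsum, hA, fun i => ?_, fun i j => ?_, fun k => ?_⟩
  · simp [hA i, mul_add, trace_mul_sum_smul, hL0, htr]
  · rw [hA i, mul_add, trace_add, Complex.add_re, re_trace_mul_mul_sum_inv_smul hG hGsymm hGinv]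
    simp [trace_smul, hL0]
  · have hmass : ∀ l, ∑ r, (trace (ρ * Pj l r)).re = 1 := fun l => by
      rw [← Complex.re_sum, ← trace_sum, ← mul_sum, hPjsum, mul_one, htr, Complex.one_re]
    have hmean : ∀ l, ∑ r, x l r * (trace (ρ * Pj l r)).re = 0 := fun l => by
      rw [← re_trace_mul_sum_smul, ← hPjspec]
      simp [re_trace_mul_sum_smul, hL0]
    have hsecond :
        ∑ r, x k r ^ 2 * (trace (ρ * Pj k r)).re = ∑ i, ∑ j, U k i * G⁻¹ i j * U k j := by
      simp_rw [sq]
      rw [← re_trace_mul_sum_smul, ← sum_smul_mul_sum_smul_of_orthogonal (hPjidem k) (hPjorth k),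
        ← hPjspec, re_trace_sum_smul_sum_inv_smul_sq hG hGsymm hGinv]
    simp_rw [Matrix.mul_smul, trace_smul, Complex.smul_re, smul_eq_mul]
    rw [randomized_variance hUW p hmass hmean, hsecond]
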